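/- arXiv:1707.06591 — 7 statements merged into one kernel-verified Lean document; each statement's English description precedes it below -/
import Mathlib

section
/- In an integro-differential algebra (F, ∂, ∫) (satisfying the strong Rota-Baxter axiom), the induced evaluation e := id − ∫∘∂ is multiplicative: e(fg) = e(f)·e(g) for all f, g ∈ F. -/
/-!
Expand `e f * e g = f g - f ∫∂g - g ∫∂f + ∫∂f ∫∂g`. The strong Rota–Baxter axiom rewrites the two
cross terms, and its weight-zero consequence `∫a ∫b = ∫(∫a b) + ∫(a ∫b)` the last one; after
cancellation only `f g - ∫(∂f g) - ∫(f ∂g)` remains, which is `e (f g)` by the Leibniz rule.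
-/

namespace IntegroDifferential

variable {R : Type*} [CommRing R] {d I : R →+ R}

theorem rotaBaxter_of_strong (hsec : ∀ f, d (I f) = f)
    (hstrong : ∀ f g, f * I g = I (f * g) + I (d f * I g)) (f g : R) :
    I f * I g = I (I f * g) + I (f * I g) := by
  simpa only [hsec] using hstrong (I f) g

variable (d I) in
def inducedEvaluation : R →+ R :=
  AddMonoidHom.id R - I.comp d

theorem inducedEvaluation_apply (f : R) : inducedEvaluation d I f = f - I (d f) :=
  rfl

theorem inducedEvaluation_mul (hLeib : ∀ f g, d (f * g) = d f * g + f * d g)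
    (hsec : ∀ f, d (I f) = f) (hstrong : ∀ f g, f * I g = I (f * g) + I (d f * I g))
    (f g : R) :
    inducedEvaluation d I (f * g) = inducedEvaluation d I f * inducedEvaluation d I g := by
  have hf := hstrong f (d g)
  have hg := hstrong g (d f)
  have hfg := rotaBaxter_of_strong hsec hstrong (d f) (d g)
  rw [mul_comm g (d f), mul_comm (d g) (I (d f))] at hg
  simp only [inducedEvaluation_apply, hLeib, map_add]
  linear_combination hf + hg - hfg

end IntegroDifferential

/-- In an integro-differential algebra (strong Rota-Baxter axiom), the induced evaluation
`e := id − ∫∘∂` is multiplicative: `e(fg) = e(f)·e(g)`. -/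
theorem induced_evaluation_multiplicative {K F : Type*} [CommRing K] [CommRing F] [Algebra K F]
    (d I : F →ₗ[K] F)
    (hLeib : ∀ f g : F, d (f * g) = d f * g + f * d g)
    (hsec : ∀ f : F, d (I f) = f)
    (hstrong : ∀ f g : F, f * I g = I (f * g) + I (d f * I g)) :
    ∀ f g : F, (f * g - I (d (f * g))) = (f - I (d f)) * (g - I (d g)) :=
  IntegroDifferential.inducedEvaluation_mul (d := d.toAddMonoidHom) (I := I.toAddMonoidHom)
    hLeib hsec hstrong
end

section
/- An ordinary differential Rota-Baxter algebra is automatically an integro-differential algebra: if (F, ∂, ∫) is a differential Rota-Baxter algebra over a field K with ker ∂ = K·1, then the strong Rota-Baxter axiom f·∫g = ∫(fg) + ∫((∂f)·∫g) holds for all f, g ∈ F. -/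
/-!
Ordinariness and `∂ ∘ ∫ = id` say that every `f` is `∫ ∂f` plus a constant `c`. For a function of
the form `∫ a + c`, the strong Rota-Baxter axiom is the weak one applied to `∫ a` and `∫ g`, plus the
`K`-linearity of `∫` on the constant part.
-/

section RotaBaxter

variable {K F : Type*} [CommSemiring K] [CommRing F] [Algebra K F] {d I : F →ₗ[K] F}

theorem exists_eq_integral_deriv_add_algebraMap (hsec : ∀ f : F, d (I f) = f)
    (hord : ∀ f : F, d f = 0 → ∃ c : K, f = algebraMap K F c) (f : F) :
    ∃ c : K, I (d f) + algebraMap K F c = f := by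
  obtain ⟨c, hc⟩ := hord (f - I (d f)) (by rw [map_sub, hsec, sub_self])
  exact ⟨c, by rw [← hc, add_sub_cancel]⟩

theorem integral_add_algebraMap_mul_integral
    (hweak : ∀ f g : F, I f * I g = I (f * I g) + I (g * I f)) (a g : F) (c : K) :
    (I a + algebraMap K F c) * I g = I ((I a + algebraMap K F c) * g) + I (a * I g) := by
  rw [add_mul, add_mul, hweak, ← Algebra.smul_def, ← Algebra.smul_def, map_add, map_smul,
    mul_comm (I a) g]
  abel

end RotaBaxter

theorem ordinary_drb_is_integro_differential_general {K F : Type*} [Field K] [CommRing F] [Algebra K F]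
    (d I : F →ₗ[K] F)
    (hsec : ∀ f : F, d (I f) = f)
    (hweak : ∀ f g : F, I f * I g = I (f * I g) + I (g * I f))
    (hord : ∀ f : F, d f = 0 → ∃ c : K, f = algebraMap K F c) :
    ∀ f g : F, f * I g = I (f * g) + I (d f * I g) := by
  intro f g
  obtain ⟨c, hc⟩ := exists_eq_integral_deriv_add_algebraMap hsec hord f
  simpa only [hc] using integral_add_algebraMap_mul_integral hweak (d f) g c

/-- An ordinary differential Rota-Baxter algebra over a field is automatically an
integro-differential algebra: the strong Rota-Baxter axiom holds. -/
theorem ordinary_drb_is_integro_differential {K F : Type*} [Field K] [CommRing F] [Algebra K F]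
    (d I : F →ₗ[K] F)
    (hLeib : ∀ f g : F, d (f * g) = d f * g + f * d g)
    (hsec : ∀ f : F, d (I f) = f)
    (hweak : ∀ f g : F, I f * I g = I (f * I g) + I (g * I f))
    (hord : ∀ f : F, d f = 0 → ∃ c : K, f = algebraMap K F c) :
    ∀ f g : F, f * I g = I (f * g) + I (d f * I g) :=
  ordinary_drb_is_integro_differential_general d I hsec hweak hord
end

section
/- In a shifted Rota-Baxter algebra over an ordered field, the generic identities ∫_{s⁺} = ∫ + H(s)·∫_s^0 and ∫_{s⁻} = ∫ + H̄(s)·∫_s^0 hold, as well as ∫_{s⁺}^0 = H(s)·∫_s^0 and ∫_{s⁻}^0 = H̄(s)·∫_s^0, for every s ∈ K. -/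
/-- Shifted Rota-Baxter operator `∫_c f := ∫f − e_c(∫f)·1`. -/
noncomputable def shiftedInt {K F : Type*} [Field K] [LinearOrder K] [IsStrictOrderedRing K] [CommRing F] [Algebra K F]
    (I : F →ₗ[K] F) (e : F →ₐ[K] K) (S : K → F ≃ₐ[K] F) (c : K) (f : F) : F :=
  I f - algebraMap K F (e (S c (I f)))

/-- Definite integral `∫_c^d f := e_d(∫_c f)`. -/
noncomputable def defInt {K F : Type*} [Field K] [LinearOrder K] [IsStrictOrderedRing K] [CommRing F] [Algebra K F]
    (I : F →ₗ[K] F) (e : F →ₐ[K] K) (S : K → F ≃ₐ[K] F) (c d : K) (f : F) : K :=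
  e (S d (shiftedInt I e S c f))

/-- The left-continuous Heaviside operator. -/
noncomputable def Heav {K : Type*} [Field K] [LinearOrder K] [IsStrictOrderedRing K] (s : K) : K :=
  if 0 < s then 1 else 0

/-!
Since `e ∘ ∫ = 0` and `S_0 = id`, one has `∫_c f = ∫f + (∫_c^0 f)·1` for every `c`. The four identities
then reduce to `φ(s⁺) = H(s)·φ(s)` and `φ(s⁻) = H̄(s)·φ(s)` for `φ(c) = ∫_c^0 f`, which hold for any
`φ` vanishing at `0` by splitting on the sign of `s`.
-/

section Heaviside

variable {K : Type*} [Field K] [LinearOrder K] [IsStrictOrderedRing K]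

theorem apply_max_zero_eq_Heav_mul {φ : K → K} (hφ : φ 0 = 0) (s : K) :
    φ (max s 0) = Heav s * φ s := by
  rcases lt_or_ge 0 s with hs | hs
  · simp [Heav, hs, max_eq_left hs.le]
  · simp [Heav, hs.not_gt, max_eq_right hs, hφ]

theorem apply_min_zero_eq_one_sub_Heav_mul {φ : K → K} (hφ : φ 0 = 0) (s : K) :
    φ (min s 0) = (1 - Heav s) * φ s := by
  rcases lt_or_ge 0 s with hs | hs
  · simp [Heav, hs, min_eq_right hs.le, hφ]
  · simp [Heav, hs.not_gt, min_eq_left hs]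

end Heaviside

section ShiftedRotaBaxter

variable {K F : Type*} [Field K] [LinearOrder K] [IsStrictOrderedRing K] [CommRing F] [Algebra K F]
  (I : F →ₗ[K] F) (e : F →ₐ[K] K) (S : K → F ≃ₐ[K] F)

theorem defInt_eq_sub (c d : K) (f : F) :
    defInt I e S c d f = e (S d (I f)) - e (S c (I f)) := by
  simp [defInt, shiftedInt]

theorem defInt_self (c : K) (f : F) : defInt I e S c c f = 0 := by
  rw [defInt_eq_sub, sub_self]

variable {I e S}

theorem shiftedInt_eq_add_defInt (heI : ∀ f : F, e (I f) = 0) (hS0 : ∀ f : F, S 0 f = f)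
    (c : K) (f : F) : shiftedInt I e S c f = I f + algebraMap K F (defInt I e S c 0 f) := by
  rw [defInt_eq_sub, hS0, heI, zero_sub, map_neg, ← sub_eq_add_neg, shiftedInt]

end ShiftedRotaBaxter

theorem generic_heaviside_identities_general {K F : Type*} [Field K] [LinearOrder K] [IsStrictOrderedRing K] [CommRing F]
    [Algebra K F]
    (I : F →ₗ[K] F)
    (e : F →ₐ[K] K) (heI : ∀ f : F, e (I f) = 0)
    (S : K → F ≃ₐ[K] F)
    (hS0 : ∀ f : F, S 0 f = f) :
    (∀ (s : K) (f : F), shiftedInt I e S (max s 0) f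
        = I f + algebraMap K F (Heav s * defInt I e S s 0 f)) ∧
    (∀ (s : K) (f : F), shiftedInt I e S (min s 0) f
        = I f + algebraMap K F ((1 - Heav s) * defInt I e S s 0 f)) ∧
    (∀ (s : K) (f : F), defInt I e S (max s 0) 0 f = Heav s * defInt I e S s 0 f) ∧
    (∀ (s : K) (f : F), defInt I e S (min s 0) 0 f = (1 - Heav s) * defInt I e S s 0 f) := by
  have hmax (s : K) (f : F) : defInt I e S (max s 0) 0 f = Heav s * defInt I e S s 0 f :=
    apply_max_zero_eq_Heav_mul (φ := fun c => defInt I e S c 0 f) (defInt_self I e S 0 f) s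
  have hmin (s : K) (f : F) : defInt I e S (min s 0) 0 f = (1 - Heav s) * defInt I e S s 0 f :=
    apply_min_zero_eq_one_sub_Heav_mul (φ := fun c => defInt I e S c 0 f) (defInt_self I e S 0 f) s
  refine ⟨fun s f => ?_, fun s f => ?_, hmax, hmin⟩
  · rw [shiftedInt_eq_add_defInt heI hS0, hmax]
  · rw [shiftedInt_eq_add_defInt heI hS0, hmin]

/-- Generic identities in a shifted Rota-Baxter algebra over an ordered field:
`∫_{s⁺} = ∫ + H(s)·∫_s^0`, `∫_{s⁻} = ∫ + H̄(s)·∫_s^0`, `∫_{s⁺}^0 = H(s)·∫_s^0`,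
`∫_{s⁻}^0 = H̄(s)·∫_s^0`. -/
theorem generic_heaviside_identities {K F : Type*} [Field K] [LinearOrder K] [IsStrictOrderedRing K] [CommRing F]
    [Algebra K F]
    (I : F →ₗ[K] F)
    (hRB : ∀ f g : F, I f * I g = I (f * I g) + I (g * I f))
    (e : F →ₐ[K] K) (heI : ∀ f : F, e (I f) = 0)
    (S : K → F ≃ₐ[K] F)
    (hSadd : ∀ a b : K, ∀ f : F, S (a + b) f = S a (S b f))
    (hS0 : ∀ f : F, S 0 f = f)
    (hcomp : ∀ (c : K) (f : F),
      S c (I f) - I (S c f) = algebraMap K F (e (S c (I f)))) :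
    (∀ (s : K) (f : F), shiftedInt I e S (max s 0) f
        = I f + algebraMap K F (Heav s * defInt I e S s 0 f)) ∧
    (∀ (s : K) (f : F), shiftedInt I e S (min s 0) f
        = I f + algebraMap K F ((1 - Heav s) * defInt I e S s 0 f)) ∧
    (∀ (s : K) (f : F), defInt I e S (max s 0) 0 f = Heav s * defInt I e S s 0 f) ∧
    (∀ (s : K) (f : F), defInt I e S (min s 0) 0 f = (1 - Heav s) * defInt I e S s 0 f) :=
  generic_heaviside_identities_general I e heI S hS0
end

section
/- The piecewise extension P(F) = F[K_⊔], the monoid algebra of (K, max) over F, satisfies the exchange law H_{a⊔b} + H_{a⊓b} = H_a + H_b for its generators, and the map H_a ↦ 1 − H̄_a extends to an F-algebra isomorphism F[K_⊔] ≅ F[K_⊓]. -/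
/-- The semigroup `(K, max)` unitarized: `WithBot K` under `⊔` with identity `⊥`. -/
def SupMon (K : Type*) := WithBot K

instance SupMon.instCommMonoid {K : Type*} [LinearOrder K] : CommMonoid (SupMon K) where
  mul a b := show WithBot K from (show WithBot K from a) ⊔ (show WithBot K from b)
  one := show WithBot K from ⊥
  mul_assoc a b c := sup_assoc (α := WithBot K) a b c
  one_mul a := bot_sup_eq (α := WithBot K) a
  mul_one a := sup_bot_eq (α := WithBot K) a
  mul_comm a b := sup_comm (α := WithBot K) a b

/-- The canonical inclusion `K → SupMon K`. -/
def SupMon.up {K : Type*} (a : K) : SupMon K := (a : WithBot K)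

/-- The semigroup `(K, min)` unitarized: `WithTop K` under `⊓` with identity `⊤`. -/
def InfMon (K : Type*) := WithTop K

instance InfMon.instCommMonoid {K : Type*} [LinearOrder K] : CommMonoid (InfMon K) where
  mul a b := show WithTop K from (show WithTop K from a) ⊓ (show WithTop K from b)
  one := show WithTop K from ⊤
  mul_assoc a b c := inf_assoc (α := WithTop K) a b c
  one_mul a := top_inf_eq (α := WithTop K) a
  mul_one a := inf_top_eq (α := WithTop K) a
  mul_comm a b := inf_comm (α := WithTop K) a b

/-- The canonical inclusion `K → InfMon K`. -/
def InfMon.up {K : Type*} (a : K) : InfMon K := (a : WithTop K)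

/-- The generator `H_a` of the piecewise extension `P(F) = F[K_⊔]`. -/
noncomputable def Hsup (F : Type*) {K : Type*} [CommRing F] [LinearOrder K] (a : K) :
    MonoidAlgebra F (SupMon K) :=
  MonoidAlgebra.of F (SupMon K) (SupMon.up a)

/-- The generator `H̄_a` of the dual piecewise extension `F[K_⊓]`. -/
noncomputable def Hinf (F : Type*) {K : Type*} [CommRing F] [LinearOrder K] (a : K) :
    MonoidAlgebra F (InfMon K) :=
  MonoidAlgebra.of F (InfMon K) (InfMon.up a)

/-!
A function of a linearly ordered argument satisfies `f (a ⊔ b) + f (a ⊓ b) = f a + f b`, because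
`{a ⊔ b, a ⊓ b} = {a, b}`. For `x = H̄_a`, `y = H̄_b` this gives `x * y = H̄_{a⊓b}` and
`x + y = H̄_{a⊔b} + H̄_{a⊓b}`, hence `(1 - x) * (1 - y) = 1 - H̄_{a⊔b}`: the elements `1 - H̄_a` multiply
like the `H_a`, so `H_a ↦ 1 - H̄_a` (and `⊥ ↦ 1`) is a monoid map `K_⊔ → F[K_⊓]` and lifts to an algebra
map. The symmetric construction `H̄_a ↦ 1 - H_a` is inverse to it since `1 - (1 - x) = x`.
-/

theorem map_max_add_map_min {K M : Type*} [LinearOrder K] [AddCommMagma M] (f : K → M) (a b : K) :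
    f (max a b) + f (min a b) = f a + f b := by
  rcases le_total a b with h | h
  · rw [max_eq_right h, min_eq_left h, add_comm]
  · rw [max_eq_left h, min_eq_right h]

namespace SupMon

variable {K : Type*} [LinearOrder K]

theorem up_mul_up (a b : K) : up a * up b = up (max a b) :=
  (WithBot.coe_max a b).symm

def lift {M : Type*} [CommMonoid M] (g : K → M) (hg : ∀ a b, g a * g b = g (max a b)) :
    SupMon K →* M where
  toFun x := WithBot.recBotCoe 1 g x
  map_one' := rfl
  map_mul' x y := by
    change WithBot K at x y
    show (WithBot.recBotCoe 1 g (x ⊔ y) : M) = _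
    induction x using WithBot.recBotCoe with
    | bot => rw [bot_sup_eq]; exact (one_mul _).symm
    | coe a =>
      induction y using WithBot.recBotCoe with
      | bot => rw [sup_bot_eq]; exact (mul_one _).symm
      | coe b => rw [← WithBot.coe_max]; exact (hg a b).symm

theorem algHom_ext {F A : Type*} [CommRing F] [Semiring A] [Algebra F A]
    ⦃φ ψ : MonoidAlgebra F (SupMon K) →ₐ[F] A⦄ (h : ∀ a, φ (Hsup F a) = ψ (Hsup F a)) : φ = ψ := by
  refine MonoidAlgebra.algHom_ext (fun x => ?_) (Subsingleton.elim _ _)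
  induction x using WithBot.recBotCoe with
  | bot => exact φ.map_one.trans ψ.map_one.symm
  | coe a => exact h a

end SupMon

namespace InfMon

variable {K : Type*} [LinearOrder K]

theorem up_mul_up (a b : K) : up a * up b = up (min a b) :=
  (WithTop.coe_min a b).symm

def lift {M : Type*} [CommMonoid M] (g : K → M) (hg : ∀ a b, g a * g b = g (min a b)) :
    InfMon K →* M where
  toFun x := WithTop.recTopCoe 1 g x
  map_one' := rfl
  map_mul' x y := by
    change WithTop K at x y
    show (WithTop.recTopCoe 1 g (x ⊓ y) : M) = _
    induction x using WithTop.recTopCoe with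
    | top => rw [top_inf_eq]; exact (one_mul _).symm
    | coe a =>
      induction y using WithTop.recTopCoe with
      | top => rw [inf_top_eq]; exact (mul_one _).symm
      | coe b => rw [← WithTop.coe_min]; exact (hg a b).symm

theorem algHom_ext {F A : Type*} [CommRing F] [Semiring A] [Algebra F A]
    ⦃φ ψ : MonoidAlgebra F (InfMon K) →ₐ[F] A⦄ (h : ∀ a, φ (Hinf F a) = ψ (Hinf F a)) : φ = ψ := by
  refine MonoidAlgebra.algHom_ext (fun x => ?_) (Subsingleton.elim _ _)
  induction x using WithTop.recTopCoe with
  | top => exact φ.map_one.trans ψ.map_one.symm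
  | coe a => exact h a

end InfMon

section Duality

variable (F : Type*) {K : Type*} [CommRing F] [LinearOrder K]

theorem Hsup_mul_Hsup (a b : K) : Hsup F a * Hsup F b = Hsup F (max a b) := by
  rw [Hsup, Hsup, ← map_mul, SupMon.up_mul_up, Hsup]

theorem Hinf_mul_Hinf (a b : K) : Hinf F a * Hinf F b = Hinf F (min a b) := by
  rw [Hinf, Hinf, ← map_mul, InfMon.up_mul_up, Hinf]

theorem one_sub_Hinf_mul_one_sub_Hinf (a b : K) :
    (1 - Hinf F a) * (1 - Hinf F b) = 1 - Hinf F (max a b) := by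
  linear_combination Hinf_mul_Hinf F a b + map_max_add_map_min (Hinf F) a b

theorem one_sub_Hsup_mul_one_sub_Hsup (a b : K) :
    (1 - Hsup F a) * (1 - Hsup F b) = 1 - Hsup F (min a b) := by
  linear_combination Hsup_mul_Hsup F a b + map_max_add_map_min (Hsup F) a b

noncomputable def supToInf : MonoidAlgebra F (SupMon K) →ₐ[F] MonoidAlgebra F (InfMon K) :=
  MonoidAlgebra.lift F _ _ (SupMon.lift (fun a => 1 - Hinf F a) (one_sub_Hinf_mul_one_sub_Hinf F))

noncomputable def infToSup : MonoidAlgebra F (InfMon K) →ₐ[F] MonoidAlgebra F (SupMon K) :=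
  MonoidAlgebra.lift F _ _ (InfMon.lift (fun a => 1 - Hsup F a) (one_sub_Hsup_mul_one_sub_Hsup F))

theorem supToInf_Hsup (a : K) : supToInf F (Hsup F a) = 1 - Hinf F a :=
  MonoidAlgebra.lift_of _ _

theorem infToSup_Hinf (a : K) : infToSup F (Hinf F a) = 1 - Hsup F a :=
  MonoidAlgebra.lift_of _ _

noncomputable def supInfEquiv : MonoidAlgebra F (SupMon K) ≃ₐ[F] MonoidAlgebra F (InfMon K) :=
  AlgEquiv.ofAlgHom (supToInf F) (infToSup F)
    (InfMon.algHom_ext fun a => by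
      simp only [AlgHom.comp_apply, AlgHom.id_apply, infToSup_Hinf, map_sub, map_one,
        supToInf_Hsup, sub_sub_cancel])
    (SupMon.algHom_ext fun a => by
      simp only [AlgHom.comp_apply, AlgHom.id_apply, supToInf_Hsup, map_sub, map_one,
        infToSup_Hinf, sub_sub_cancel])

theorem supInfEquiv_Hsup (a : K) : supInfEquiv F (Hsup F a) = 1 - Hinf F a :=
  supToInf_Hsup F a

end Duality

theorem piecewise_extension_exchange_and_duality_general
    {K F : Type*} [LinearOrder K] [CommRing F] :
    (∀ a b : K, Hsup F (max a b) + Hsup F (min a b) = Hsup F a + Hsup F b) ∧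
    ∃ φ : MonoidAlgebra F (SupMon K) ≃ₐ[F] MonoidAlgebra F (InfMon K),
      ∀ a : K, φ (Hsup F a) = 1 - Hinf F a :=
  ⟨map_max_add_map_min (Hsup F), supInfEquiv F, supInfEquiv_Hsup F⟩

/-- The piecewise extension `P(F) = F[K_⊔]` satisfies the exchange law
`H_{a⊔b} + H_{a⊓b} = H_a + H_b`, and `H_a ↦ 1 − H̄_a` extends to an `F`-algebra
isomorphism `F[K_⊔] ≅ F[K_⊓]`. -/
theorem piecewise_extension_exchange_and_duality
    {K F : Type*} [Field K] [LinearOrder K] [IsStrictOrderedRing K] [CommRing F] [Algebra K F] :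
    (∀ a b : K, Hsup F (max a b) + Hsup F (min a b) = Hsup F a + Hsup F b) ∧
    ∃ φ : MonoidAlgebra F (SupMon K) ≃ₐ[F] MonoidAlgebra F (InfMon K),
      ∀ a : K, φ (Hsup F a) = 1 - Hinf F a :=
  piecewise_extension_exchange_and_duality_general
end

section
/- The differential Rota-Baxter algebra (P(F), ∂, ∫) obtained by extending the derivation by ∂H_a = 0 is not an integro-differential algebra: its induced pseudo-evaluation ê := id − ∫∘∂ fails to be multiplicative. Concretely, in the piecewise extension of any ordinary shifted differential Rota-Baxter algebra F over an ordered field K containing the polynomials, ê(x H_1 · x H_2) = 4 H_2 while ê(x H_1)·ê(x H_2) = 2 H_2, where x = ∫1. -/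
theorem integral_deriv_integral_one_sq {K F : Type*} [CommSemiring K] [CommRing F] [Algebra K F]
    {d I : F →ₗ[K] F}
    (hLeib : ∀ f g : F, d (f * g) = d f * g + f * d g)
    (hsec : ∀ f : F, d (I f) = f)
    (hRB : ∀ f g : F, I f * I g = I (f * I g) + I (g * I f)) :
    I (d (I 1 * I 1)) = I 1 * I 1 := by
  rw [hLeib, hsec, one_mul, mul_one, hRB 1 1, one_mul, map_add]

theorem SupMon.up_mul_up_s15 {K : Type*} [LinearOrder K] (a b : K) :
    SupMon.up a * SupMon.up b = SupMon.up (max a b) :=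
  (WithBot.coe_sup a b).symm

theorem single_up_mul_single_up {K F : Type*} [LinearOrder K] [Semiring F] (a b : K) (f g : F) :
    MonoidAlgebra.single (SupMon.up a) f * MonoidAlgebra.single (SupMon.up b) g
      = MonoidAlgebra.single (SupMon.up (max a b)) (f * g) := by
  rw [MonoidAlgebra.single_mul_single, SupMon.up_mul_up_s15]

theorem smul_single_one_injective {K F M : Type*} [Field K] [Semiring F] [Algebra K F]
    [Nontrivial F] (m : M) :
    Function.Injective fun c : K => c • MonoidAlgebra.single m (1 : F) := by
  intro c c' h
  simp only [MonoidAlgebra.smul_single, MonoidAlgebra.single_right_inj, Algebra.smul_def,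
    mul_one] at h
  exact (algebraMap K F).injective h

section Piecewise

variable {K F : Type*} [Field K] [LinearOrder K] [IsStrictOrderedRing K] [CommRing F] [Algebra K F]

theorem defInt_zero_zero {I : F →ₗ[K] F} {e : F →ₐ[K] K} {S : K → F ≃ₐ[K] F}
    (hS0 : ∀ f : F, S 0 f = f) (heI : ∀ f : F, e (I f) = 0) (f : F) :
    defInt I e S 0 0 f = 0 := by
  simp only [defInt, shiftedInt, hS0, map_sub, heI, AlgHom.commutes, Algebra.algebraMap_self,
    RingHom.id_apply, sub_self]

theorem sub_shiftedInt_of_integral_eq {I : F →ₗ[K] F} {e : F →ₐ[K] K} {S : K → F ≃ₐ[K] F}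
    {f g : F} (hfg : I g = f) (a : K) :
    f - shiftedInt I e S a g = algebraMap K F (e (S a f)) := by
  rw [shiftedInt, hfg, sub_sub_cancel]

theorem sub_integral_deriv_single_up_of_nonneg
    {d I : F →ₗ[K] F} {e : F →ₐ[K] K} {S : K → F ≃ₐ[K] F}
    {J D : MonoidAlgebra F (SupMon K) →ₗ[K] MonoidAlgebra F (SupMon K)}
    (hS0 : ∀ f : F, S 0 f = f) (heI : ∀ f : F, e (I f) = 0)
    (hJH : ∀ (a : K) (f : F),
      J (MonoidAlgebra.single (SupMon.up a) f)
        = MonoidAlgebra.single (SupMon.up a) (shiftedInt I e S (max a 0) f)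
          - defInt I e S (min a 0) 0 f •
              ((1 : MonoidAlgebra F (SupMon K))
                - MonoidAlgebra.single (SupMon.up a) (1 : F)))
    (hDH : ∀ (a : K) (f : F),
      D (MonoidAlgebra.single (SupMon.up a) f) = MonoidAlgebra.single (SupMon.up a) (d f))
    ⦃a : K⦄ (ha : 0 ≤ a) ⦃f : F⦄ (hf : I (d f) = f) :
    MonoidAlgebra.single (SupMon.up a) f - J (D (MonoidAlgebra.single (SupMon.up a) f))
      = e (S a f) • MonoidAlgebra.single (SupMon.up a) (1 : F) := by
  rw [hDH, hJH, max_eq_left ha, min_eq_right ha, defInt_zero_zero hS0 heI, zero_smul, sub_zero,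
    ← MonoidAlgebra.single_sub, sub_shiftedInt_of_integral_eq hf, MonoidAlgebra.smul_single,
    Algebra.smul_def, mul_one]

end Piecewise

theorem pseudo_evaluation_not_multiplicative_general
    {K F : Type*} [Field K] [LinearOrder K] [IsStrictOrderedRing K] [CommRing F] [Algebra K F] [Nontrivial F]
    (d I : F →ₗ[K] F)
    (hLeib : ∀ f g : F, d (f * g) = d f * g + f * d g)
    (hsec : ∀ f : F, d (I f) = f)
    (hRB : ∀ f g : F, I f * I g = I (f * I g) + I (g * I f))
    (e : F →ₐ[K] K) (heI : ∀ f : F, e (I f) = 0)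
    (S : K → F ≃ₐ[K] F)
    (hS0 : ∀ f : F, S 0 f = f)
    (hx : ∀ c : K, e (S c (I 1)) = c)
    (J D : MonoidAlgebra F (SupMon K) →ₗ[K] MonoidAlgebra F (SupMon K))
    (hJH : ∀ (a : K) (f : F),
      J (MonoidAlgebra.single (SupMon.up a) f)
        = MonoidAlgebra.single (SupMon.up a) (shiftedInt I e S (max a 0) f)
          - defInt I e S (min a 0) 0 f •
              ((1 : MonoidAlgebra F (SupMon K))
                - MonoidAlgebra.single (SupMon.up a) (1 : F)))
    (hDH : ∀ (a : K) (f : F),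
      D (MonoidAlgebra.single (SupMon.up a) f) = MonoidAlgebra.single (SupMon.up a) (d f)) :
    (MonoidAlgebra.single (SupMon.up (1 : K)) (I 1)
        * MonoidAlgebra.single (SupMon.up (2 : K)) (I 1)
      - J (D (MonoidAlgebra.single (SupMon.up (1 : K)) (I 1)
        * MonoidAlgebra.single (SupMon.up (2 : K)) (I 1))))
      = (4 : K) • MonoidAlgebra.single (SupMon.up (2 : K)) (1 : F) ∧
    (MonoidAlgebra.single (SupMon.up (1 : K)) (I 1)
        - J (D (MonoidAlgebra.single (SupMon.up (1 : K)) (I 1))))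
      * (MonoidAlgebra.single (SupMon.up (2 : K)) (I 1)
        - J (D (MonoidAlgebra.single (SupMon.up (2 : K)) (I 1))))
      = (2 : K) • MonoidAlgebra.single (SupMon.up (2 : K)) (1 : F) ∧
    (MonoidAlgebra.single (SupMon.up (1 : K)) (I 1)
        * MonoidAlgebra.single (SupMon.up (2 : K)) (I 1)
      - J (D (MonoidAlgebra.single (SupMon.up (1 : K)) (I 1)
        * MonoidAlgebra.single (SupMon.up (2 : K)) (I 1))))
    ≠ (MonoidAlgebra.single (SupMon.up (1 : K)) (I 1)
        - J (D (MonoidAlgebra.single (SupMon.up (1 : K)) (I 1))))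
      * (MonoidAlgebra.single (SupMon.up (2 : K)) (I 1)
        - J (D (MonoidAlgebra.single (SupMon.up (2 : K)) (I 1)))) := by
  have hx_fix : I (d (I 1)) = I 1 := by rw [hsec]
  have hx_sq_fix : I (d (I 1 * I 1)) = I 1 * I 1 := integral_deriv_integral_one_sq hLeib hsec hRB
  have hê := sub_integral_deriv_single_up_of_nonneg hS0 heI hJH hDH
  rw [single_up_mul_single_up, max_eq_right one_le_two, hê zero_le_two hx_sq_fix,
    hê zero_le_one hx_fix, hê zero_le_two hx_fix, map_mul, map_mul, hx, hx, smul_mul_smul_comm,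
    single_up_mul_single_up, max_eq_right one_le_two, mul_one, one_mul]
  exact ⟨by norm_num, by norm_num, (smul_single_one_injective _).ne (by norm_num)⟩

/-- The piecewise extension of an ordinary shifted differential Rota-Baxter algebra
(with the derivation extended by `∂H_a = 0`) is not an integro-differential algebra:
the induced pseudo-evaluation `ê := id − ∫∘∂` fails to be multiplicative. Concretely,
`ê(x H_1 · x H_2) = 4 H_2` while `ê(x H_1)·ê(x H_2) = 2 H_2`, where `x = ∫1`. -/
theorem pseudo_evaluation_not_multiplicative
    {K F : Type*} [Field K] [LinearOrder K] [IsStrictOrderedRing K] [CommRing F] [Algebra K F] [Nontrivial F]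
    (d I : F →ₗ[K] F)
    (hLeib : ∀ f g : F, d (f * g) = d f * g + f * d g)
    (hsec : ∀ f : F, d (I f) = f)
    (hRB : ∀ f g : F, I f * I g = I (f * I g) + I (g * I f))
    (hord : LinearMap.ker d = Submodule.span K {(1 : F)})
    (e : F →ₐ[K] K) (heI : ∀ f : F, e (I f) = 0)
    (S : K → F ≃ₐ[K] F)
    (hSadd : ∀ a b : K, ∀ f : F, S (a + b) f = S a (S b f))
    (hS0 : ∀ f : F, S 0 f = f)
    (hSd : ∀ (c : K) (f : F), S c (d f) = d (S c f))
    (hcomp : ∀ (c : K) (f : F),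
      S c (I f) - I (S c f) = algebraMap K F (e (S c (I f))))
    (hx : ∀ c : K, e (S c (I 1)) = c)
    (J D : MonoidAlgebra F (SupMon K) →ₗ[K] MonoidAlgebra F (SupMon K))
    (hJone : ∀ f : F,
      J (MonoidAlgebra.single (1 : SupMon K) f) = MonoidAlgebra.single (1 : SupMon K) (I f))
    (hJH : ∀ (a : K) (f : F),
      J (MonoidAlgebra.single (SupMon.up a) f)
        = MonoidAlgebra.single (SupMon.up a) (shiftedInt I e S (max a 0) f)
          - defInt I e S (min a 0) 0 f •
              ((1 : MonoidAlgebra F (SupMon K))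
                - MonoidAlgebra.single (SupMon.up a) (1 : F)))
    (hDone : ∀ f : F,
      D (MonoidAlgebra.single (1 : SupMon K) f) = MonoidAlgebra.single (1 : SupMon K) (d f))
    (hDH : ∀ (a : K) (f : F),
      D (MonoidAlgebra.single (SupMon.up a) f) = MonoidAlgebra.single (SupMon.up a) (d f)) :
    (MonoidAlgebra.single (SupMon.up (1 : K)) (I 1)
        * MonoidAlgebra.single (SupMon.up (2 : K)) (I 1)
      - J (D (MonoidAlgebra.single (SupMon.up (1 : K)) (I 1)
        * MonoidAlgebra.single (SupMon.up (2 : K)) (I 1))))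
      = (4 : K) • MonoidAlgebra.single (SupMon.up (2 : K)) (1 : F) ∧
    (MonoidAlgebra.single (SupMon.up (1 : K)) (I 1)
        - J (D (MonoidAlgebra.single (SupMon.up (1 : K)) (I 1))))
      * (MonoidAlgebra.single (SupMon.up (2 : K)) (I 1)
        - J (D (MonoidAlgebra.single (SupMon.up (2 : K)) (I 1))))
      = (2 : K) • MonoidAlgebra.single (SupMon.up (2 : K)) (1 : F) ∧
    (MonoidAlgebra.single (SupMon.up (1 : K)) (I 1)
        * MonoidAlgebra.single (SupMon.up (2 : K)) (I 1)
      - J (D (MonoidAlgebra.single (SupMon.up (1 : K)) (I 1)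
        * MonoidAlgebra.single (SupMon.up (2 : K)) (I 1))))
    ≠ (MonoidAlgebra.single (SupMon.up (1 : K)) (I 1)
        - J (D (MonoidAlgebra.single (SupMon.up (1 : K)) (I 1))))
      * (MonoidAlgebra.single (SupMon.up (2 : K)) (I 1)
        - J (D (MonoidAlgebra.single (SupMon.up (2 : K)) (I 1)))) :=
  pseudo_evaluation_not_multiplicative_general d I hLeib hsec hRB e heI S hS0 hx J D hJH hDH
end

section
/- In the distribution module D(F), the F-submodule of relations Z (differentially generated by f δ_a − e_a(f) δ_a) is generated as a plain F-module by the elements f δ_a^{(k)} − Σ_{i=0}^k C(k,i)(−1)^i e_a(∂^i f) δ_a^{(k−i)} for a ∈ K, f ∈ F, k ≥ 0. In particular, for each k and f, the element f δ_a^{(k)} − Σ_{i=0}^k C(k,i)(−1)^i e_a(∂^i f) δ_a^{(k−i)} lies in Z, by the recursion ζ_{f,k} = ∂^k ζ_{f,0} − Σ_{i=0}^{k−1} C(k,i) ζ_{∂^{k−i}f, i}. -/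
/-!
Write `ζ f k` for `f δ^{(k)} − Σ_{i ≤ k} C(k,i) (−1)^i e(∂^i f) δ^{(k−i)}`. By Pascal's rule these
elements obey the Leibniz-type rule `∂ (ζ f k) = ζ f (k+1) + ζ (∂f) k`. Hence the `F`-span of the
`ζ`'s is `∂`-stable and contains the generators `ζ f 0` of `Z`, so it contains `Z`; conversely
`ζ f (k+1) = ∂ (ζ f k) − ζ (∂f) k` puts every `ζ f k` in `Z` by induction on `k`. Iterating the rule
gives `∂^k (ζ f 0) = Σ_{i ≤ k} C(k,i) ζ (∂^{k−i} f) i`, whose top term is `ζ f k`: this is the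
recursion.
-/

open Finset

theorem iterate_eq_sum_choose_of_leibniz {F M G : Type*} [AddCommMonoid M] [FunLike G M M]
    [AddMonoidHomClass G M M] (D : G) (d : F → F) (z : F → ℕ → M)
    (hz : ∀ f k, D (z f k) = z f (k + 1) + z (d f) k) (n k : ℕ) (f : F) :
    (⇑D)^[n] (z f k) = ∑ i ∈ range (n + 1), n.choose i • z (d^[n - i] f) (k + i) := by
  induction n with
  | zero => simp
  | succ n ih =>
    rw [Function.iterate_succ_apply', ih, sum_choose_succ_nsmul (fun i j => z (d^[j] f) (k + i))]
    simp only [map_sum, map_nsmul, hz, nsmul_add, sum_add_distrib, ← add_assoc]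
    refine (add_comm _ _).trans (congrArg₂ (· + ·) (sum_congr rfl fun i hi => ?_) rfl)
    rw [← Function.iterate_succ_apply' d, Nat.sub_add_comm (Nat.lt_succ_iff.mp (mem_range.mp hi))]

theorem mem_of_leibniz {F M G S : Type*} [AddCommGroup M] [FunLike G M M]
    [AddMonoidHomClass G M M] [SetLike S M] [AddSubgroupClass S M] (D : G) (d : F → F)
    (z : F → ℕ → M) (hz : ∀ f k, D (z f k) = z f (k + 1) + z (d f) k) {p : S} (hp₀ : ∀ f, z f 0 ∈ p)
    (hpD : ∀ m ∈ p, D m ∈ p) (k : ℕ) (f : F) : z f k ∈ p := by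
  induction k generalizing f with
  | zero => exact hp₀ f
  | succ k ih => simpa [hz] using sub_mem (hpD _ (ih f)) (ih (d f))

theorem Submodule.apply_mem_span_of_leibniz {R M G : Type*} [Semiring R] [AddCommMonoid M]
    [Module R M] [FunLike G M M] [AddMonoidHomClass G M M] (D : G) (d : R → R)
    (hD : ∀ (r : R) (m : M), D (r • m) = d r • m + r • D m) {s : Set M}
    (hs : ∀ m ∈ s, D m ∈ span R s) {m : M} (hm : m ∈ span R s) : D m ∈ span R s := by
  induction hm using span_induction with
  | mem x hx => exact hs x hx
  | zero => simp
  | add x y _ _ hx hy => simpa using add_mem hx hy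
  | smul r x hx hDx => simpa [hD] using add_mem (smul_mem _ (d r) hx) (smul_mem _ r hDx)

section SiftingRelation

variable {K F M : Type*} [Ring K] [AddCommGroup M] [Module K M] [SMul F M]
  (d : F → F) (ε : F → K) (δ : ℕ → M)

/-- `siftingRelation d (e a) (δ a) f k` is `ζ_{f,k}` at the point `a`. -/
def siftingRelation (f : F) (k : ℕ) : M :=
  f • δ k - ∑ i ∈ range (k + 1), (((-1 : K) ^ i * (k.choose i : K)) * ε (d^[i] f)) • δ (k - i)

theorem siftingRelation_zero (f : F) : siftingRelation d ε δ f 0 = f • δ 0 - ε f • δ 0 := by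
  simp [siftingRelation]

theorem siftingRelation_eq_sub_sum_nsmul (f : F) (k : ℕ) :
    siftingRelation d ε δ f k =
      f • δ k - ∑ i ∈ range (k + 1), k.choose i • (((-1 : K) ^ i * ε (d^[i] f)) • δ (k - i)) := by
  refine congrArg (f • δ k - ·) (sum_congr rfl fun i _ => ?_)
  rw [← Nat.cast_smul_eq_nsmul K, smul_smul, ← mul_assoc, Nat.cast_comm]

theorem apply_siftingRelation (D : M →ₗ[K] M)
    (hD : ∀ (f : F) (m : M), D (f • m) = d f • m + f • D m) (hδ : ∀ k, D (δ k) = δ (k + 1))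
    (f : F) (k : ℕ) :
    D (siftingRelation d ε δ f k) =
      siftingRelation d ε δ f (k + 1) + siftingRelation d ε δ (d f) k := by
  set T : F → ℕ → ℕ → M := fun g i j => ((-1 : K) ^ i * ε (d^[i] g)) • δ j
  have hshift : ∀ i j, T f (i + 1) j = -T (d f) i j := fun i j => by
    simp only [T, pow_succ, Function.iterate_succ_apply, mul_neg_one, neg_mul, neg_smul]
  have hD_sum : D (∑ i ∈ range (k + 1), k.choose i • T f i (k - i)) =
      ∑ i ∈ range (k + 1), k.choose i • T f i (k + 1 - i) := by
    simp only [map_sum, map_nsmul, T, map_smul, hδ]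
    refine sum_congr rfl fun i hi => ?_
    rw [Nat.sub_add_comm (Nat.lt_succ_iff.mp (mem_range.mp hi))]
  have hpascal := sum_choose_succ_nsmul (T f) k
  simp only [hshift, smul_neg, sum_neg_distrib] at hpascal
  rw [siftingRelation_eq_sub_sum_nsmul, siftingRelation_eq_sub_sum_nsmul,
    siftingRelation_eq_sub_sum_nsmul, map_sub, hD, hδ]
  change d f • δ k + f • δ (k + 1) - D (∑ i ∈ range (k + 1), k.choose i • T f i (k - i)) =
    f • δ (k + 1) - ∑ i ∈ range (k + 2), (k + 1).choose i • T f i (k + 1 - i) +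
      (d f • δ k - ∑ i ∈ range (k + 1), k.choose i • T (d f) i (k - i))
  rw [hD_sum, hpascal]
  abel

theorem siftingRelation_eq_iterate_sub_sum (D : M →ₗ[K] M)
    (hD : ∀ (f : F) (m : M), D (f • m) = d f • m + f • D m) (hδ : ∀ k, D (δ k) = δ (k + 1))
    (f : F) (k : ℕ) :
    siftingRelation d ε δ f k = (⇑D)^[k] (f • δ 0 - ε f • δ 0) -
      ∑ i ∈ range k, (k.choose i : K) • siftingRelation d ε δ (d^[k - i] f) i := by
  rw [← siftingRelation_zero, iterate_eq_sum_choose_of_leibniz D d _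
    (apply_siftingRelation d ε δ D hD hδ) k 0 f, sum_range_succ]
  simp [Nat.cast_smul_eq_nsmul]

end SiftingRelation

theorem distribution_module_relations_general
    {K F M : Type*} [Field K] [CommRing F] [Algebra K F]
    [AddCommGroup M] [Module K M] [Module F M]
    (d : F →ₗ[K] F)
    (e : K → F →ₐ[K] K)
    (D : M →ₗ[K] M)
    (hDLeib : ∀ (f : F) (m : M), D (f • m) = d f • m + f • D m)
    (δ : K → ℕ → M)
    (hδ : ∀ (a : K) (k : ℕ), D (δ a k) = δ a (k + 1))
    (Z : Submodule F M)
    (hZgen : ∀ (a : K) (f : F), f • δ a 0 - e a f • δ a 0 ∈ Z)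
    (hZclosed : ∀ m ∈ Z, D m ∈ Z)
    (hZmin : ∀ N : Submodule F M,
      (∀ (a : K) (f : F), f • δ a 0 - e a f • δ a 0 ∈ N) →
      (∀ m ∈ N, D m ∈ N) → Z ≤ N) :
    Z = Submodule.span F { m : M | ∃ (a : K) (f : F) (k : ℕ),
        m = f • δ a k - ∑ i ∈ Finset.range (k + 1),
              (((-1 : K) ^ i * (k.choose i : K)) * e a ((⇑d)^[i] f)) • δ a (k - i) } ∧
    ∀ (a : K) (f : F) (k : ℕ),
      (f • δ a k - ∑ i ∈ Finset.range (k + 1),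
          (((-1 : K) ^ i * (k.choose i : K)) * e a ((⇑d)^[i] f)) • δ a (k - i))
        = (⇑D)^[k] (f • δ a 0 - e a f • δ a 0)
          - ∑ i ∈ Finset.range k, (k.choose i : K) •
              ((⇑d)^[k - i] f • δ a i - ∑ j ∈ Finset.range (i + 1),
                (((-1 : K) ^ j * (i.choose j : K)) * e a ((⇑d)^[j] ((⇑d)^[k - i] f)))
                  • δ a (i - j)) := by
  have hstep := fun a => apply_siftingRelation (⇑d) (e a) (δ a) D hDLeib (hδ a)
  refine ⟨le_antisymm ?_ ?_,
    fun a f k => siftingRelation_eq_iterate_sub_sum _ _ _ D hDLeib (hδ a) f k⟩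
  · refine hZmin _
      (fun a f => Submodule.subset_span ⟨a, f, 0, (siftingRelation_zero _ _ _ f).symm⟩)
      fun m hm => Submodule.apply_mem_span_of_leibniz D d hDLeib ?_ hm
    rintro _ ⟨a, f, k, rfl⟩
    exact (hstep a f k).symm ▸
      add_mem (Submodule.subset_span ⟨a, f, k + 1, rfl⟩) (Submodule.subset_span ⟨a, d f, k, rfl⟩)
  · refine Submodule.span_le.mpr ?_
    rintro _ ⟨a, f, k, rfl⟩
    exact mem_of_leibniz D d (siftingRelation (⇑d) (e a) (δ a)) (hstep a)
      (fun f => (siftingRelation_zero (⇑d) (e a) (δ a) f).symm ▸ hZgen a f) hZclosed k f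

/-- Presentation Lemma for the distribution module: the differential `F`-submodule `Z`
(differentially generated by the sifting relations `f δ_a − e_a(f) δ_a`) is generated as a
plain `F`-module by the elements
`ζ_{f,k} = f δ_a^{(k)} − Σ_{i=0}^k C(k,i)(−1)^i e_a(∂^i f) δ_a^{(k−i)}`;
in particular each `ζ_{f,k}` lies in `Z`, via the recursion
`ζ_{f,k} = ∂^k ζ_{f,0} − Σ_{i=0}^{k−1} C(k,i) ζ_{∂^{k−i}f, i}`. -/
theorem distribution_module_relations
    {K F M : Type*} [Field K] [CommRing F] [Algebra K F]
    [AddCommGroup M] [Module K M] [Module F M] [IsScalarTower K F M]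
    (d : F →ₗ[K] F)
    (hLeib : ∀ f g : F, d (f * g) = d f * g + f * d g)
    (e : K → F →ₐ[K] K)
    (D : M →ₗ[K] M)
    (hDLeib : ∀ (f : F) (m : M), D (f • m) = d f • m + f • D m)
    (δ : K → ℕ → M)
    (hδ : ∀ (a : K) (k : ℕ), D (δ a k) = δ a (k + 1))
    (Z : Submodule F M)
    (hZgen : ∀ (a : K) (f : F), f • δ a 0 - e a f • δ a 0 ∈ Z)
    (hZclosed : ∀ m ∈ Z, D m ∈ Z)
    (hZmin : ∀ N : Submodule F M,
      (∀ (a : K) (f : F), f • δ a 0 - e a f • δ a 0 ∈ N) →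
      (∀ m ∈ N, D m ∈ N) → Z ≤ N) :
    Z = Submodule.span F { m : M | ∃ (a : K) (f : F) (k : ℕ),
        m = f • δ a k - ∑ i ∈ Finset.range (k + 1),
              (((-1 : K) ^ i * (k.choose i : K)) * e a ((⇑d)^[i] f)) • δ a (k - i) } ∧
    ∀ (a : K) (f : F) (k : ℕ),
      (f • δ a k - ∑ i ∈ Finset.range (k + 1),
          (((-1 : K) ^ i * (k.choose i : K)) * e a ((⇑d)^[i] f)) • δ a (k - i))
        = (⇑D)^[k] (f • δ a 0 - e a f • δ a 0)
          - ∑ i ∈ Finset.range k, (k.choose i : K) •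
              ((⇑d)^[k - i] f • δ a i - ∑ j ∈ Finset.range (i + 1),
                (((-1 : K) ^ j * (i.choose j : K)) * e a ((⇑d)^[j] ((⇑d)^[k - i] f)))
                  • δ a (i - j)) :=
  distribution_module_relations_general d e D hDLeib δ hδ Z hZgen hZclosed hZmin
end

section
/- In a differential Rota-Baxter module (M, ∂_M, ∫_M) over an integro-differential algebra (F, ∂, ∫), constant-homogeneity of ∫_M over ker ∂ (∫_M(cφ) = c·∫_M(φ) for all c ∈ ker ∂, φ ∈ M) is equivalent to the identity ∫_M(fφ) = f·∫_M(φ) − ∫_M((∂f)·∫_M(φ)) for all f ∈ F, φ ∈ M. -/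
/-!
Write `f = (f - ∫ ∂f) + ∫ ∂f`. The first summand is a constant, so it passes through `∫_M` by
homogeneity, while the module Rota-Baxter axiom at `∂f` gives
`∫_M ((∫ ∂f) • φ) = (∫ ∂f) • ∫_M φ - ∫_M (∂f • ∫_M φ)`. Conversely, the identity at a constant `c`
is homogeneity, since its correction term `∫_M (∂c • ∫_M φ)` vanishes.
-/

theorem integral_smul_eq_of_constant_homogeneous {F M : Type*} [Ring F] [AddCommGroup M]
    [Module F M] (d I : F →+ F) (J : M →+ M) (hsec : ∀ f : F, d (I f) = f)
    (hmodRB : ∀ (f : F) (m : M), I f • J m = J (f • J m) + J (I f • m))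
    (hconst : ∀ c : F, d c = 0 → ∀ m : M, J (c • m) = c • J m) (f : F) (m : M) :
    J (f • m) = f • J m - J (d f • J m) := by
  have hker : d (f - I (d f)) = 0 := by rw [map_sub, hsec, sub_self]
  have hRB : J (I (d f) • m) = I (d f) • J m - J (d f • J m) :=
    eq_sub_of_add_eq' (hmodRB (d f) m).symm
  calc J (f • m) = J ((f - I (d f)) • m) + J (I (d f) • m) := by
        rw [← map_add, ← add_smul, sub_add_cancel]
    _ = (f - I (d f)) • J m + (I (d f) • J m - J (d f • J m)) := by rw [hconst _ hker m, hRB]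
    _ = f • J m - J (d f • J m) := by rw [sub_smul]; abel

theorem module_constant_homogeneity_iff_general
    {K F M : Type*} [CommRing K] [CommRing F] [Algebra K F]
    [AddCommGroup M] [Module K M] [Module F M]
    (d I : F →ₗ[K] F)
    (hsec : ∀ f : F, d (I f) = f)
    (J : M →ₗ[K] M)
    (hmodRB : ∀ (f : F) (m : M), I f • J m = J (f • J m) + J (I f • m)) :
    (∀ c : F, d c = 0 → ∀ m : M, J (c • m) = c • J m) ↔
    (∀ (f : F) (m : M), J (f • m) = f • J m - J (d f • J m)) :=
  ⟨integral_smul_eq_of_constant_homogeneous d.toAddMonoidHom I.toAddMonoidHom J.toAddMonoidHom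
      hsec hmodRB,
    fun h c hc m => by
      simpa only [hc, zero_smul, map_zero, sub_zero] using h c m⟩

/-- In a differential Rota-Baxter module `(M, ∂_M, ∫_M)` over an integro-differential
algebra `(F, ∂, ∫)`, homogeneity of `∫_M` over constants `c ∈ ker ∂` is equivalent to
the identity `∫_M(fφ) = f·∫_M(φ) − ∫_M((∂f)·∫_M(φ))`. -/
theorem module_constant_homogeneity_iff
    {K F M : Type*} [CommRing K] [CommRing F] [Algebra K F]
    [AddCommGroup M] [Module K M] [Module F M] [IsScalarTower K F M]
    (d I : F →ₗ[K] F)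
    (hLeib : ∀ f g : F, d (f * g) = d f * g + f * d g)
    (hsec : ∀ f : F, d (I f) = f)
    (hstrong : ∀ f g : F, f * I g = I (f * g) + I (d f * I g))
    (D J : M →ₗ[K] M)
    (hDLeib : ∀ (f : F) (m : M), D (f • m) = d f • m + f • D m)
    (hJsec : ∀ m : M, D (J m) = m)
    (hmodRB : ∀ (f : F) (m : M), I f • J m = J (f • J m) + J (I f • m)) :
    (∀ c : F, d c = 0 → ∀ m : M, J (c • m) = c • J m) ↔
    (∀ (f : F) (m : M), J (f • m) = f • J m - J (d f • J m)) :=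
  module_constant_homogeneity_iff_general d I hsec J hmodRB
end
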